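/- arXiv:2604.05143 — 2 statements merged into one kernel-verified Lean document; each statement's English description precedes it below -/
import Mathlib

section
/- Bootstrap improvement of the decay rate: suppose ε ∈ (0,1) with γ − 1 − ε > 0, C₀ > 0 with F̄(z) ≤ C₀ z^{−ε} for all z > 0, and let g be a continuous solution of the Volterra equation (★) on [0, ∞). If for some δ ∈ [0,1] and C > 0 one has |g(u)| ≤ C (1+u)^{−δ} for all u ≥ 0, then there exist C′ > 0 and U > 0 such that |g(u)| ≤ C′ u^{−(δ+ε)} for all u ≥ U. -/
open MeasureTheory Filter Set Topology

/-- Tail of a distribution function. -/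
noncomputable def Fbar (F : ℝ → ℝ) (x : ℝ) : ℝ := 1 - F x

/-- `F` is the distribution function of a positive random variable: nondecreasing,
right-continuous, vanishing on `(-∞, 0]`, tending to `1` at `+∞`. -/
def IsCDF (F : ℝ → ℝ) : Prop :=
  Monotone F ∧ (∀ x, ContinuousWithinAt F (Set.Ici x) x) ∧
    (∀ x ≤ 0, F x = 0) ∧ Tendsto F atTop (𝓝 1)

/-- The convolution operator `(Bg)(t) = ∫₀ᵗ g(t-y) F̄(y) dy`. -/
noncomputable def Bop (F g : ℝ → ℝ) (t : ℝ) : ℝ :=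
  ∫ y in (0:ℝ)..t, g (t - y) * Fbar F y

/-- `g` is a continuous solution of the Volterra equation (★) on `[0, ∞)`. -/
def IsVolterraSol (γ α μ Φ₀ : ℝ) (F g : ℝ → ℝ) : Prop :=
  ContinuousOn g (Set.Ici 0) ∧
  ∀ u : ℝ, 0 < u → g u = μ * u ^ (-γ) * Real.exp (α / u) *
    ∫ t in (0:ℝ)..u, t ^ (γ - 2) * Real.exp (-α / t) * (Φ₀ * Fbar F t + Bop F g t)

/-!
Split `(Bg)(t) = ∫₀ᵗ g(t-y) F̄(y) dy` at `t/2`: for `y ≤ t/2` use the decay of `g` at `t - y ≥ t/2`,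
for `y ≥ t/2` use `F̄(y) ≤ C₀ (t/2)^{-ε}`. If `|g(s)| ≤ D (1+s)^{-β}` with `β ≠ 1`, this gives
`|Φ₀ F̄(t) + (Bg)(t)| ≲ t^{-ε} (1+t)^σ` for any `σ ≥ max(0, 1-β)`, and since the Volterra kernel
`u^{-γ} t^{γ-2}` turns `t^{-ε}` into `u^{-1-ε}`, the equation yields `|g(u)| ≲ u^{σ-1-ε}`.
For `δ < 1` take `β = δ`, `σ = 1 - δ`. For `δ = 1` the case `β = 1` would lose a logarithm, so first
run the step from the weaker rate `1 - ε/2`, obtaining the rate `1 + ε/2 > 1`, and then run it again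
with `σ = 0`.
-/

open intervalIntegral

lemma Fbar_nonneg {F : ℝ → ℝ} (hF : IsCDF F) (x : ℝ) : 0 ≤ Fbar F x :=
  sub_nonneg.2 (hF.1.ge_of_tendsto hF.2.2.2 x)

lemma integral_one_add_rpow_neg_le {β σ T : ℝ} (hT : 0 ≤ T) (hβ : β ≠ 1) (hσ : 0 ≤ σ)
    (hβσ : 1 - β ≤ σ) :
    ∫ s in (0:ℝ)..T, (1 + s) ^ (-β) ≤ (1 + T) ^ σ / |1 - β| := by
  have h1T : 1 ≤ 1 + T := by linarith
  have hint : ∫ s in (0:ℝ)..T, (1 + s) ^ (-β) = ((1 + T) ^ (1 - β) - 1) / (1 - β) := by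
    have hβ' : -β ≠ -1 := by contrapose! hβ; linarith
    have h0 : (0:ℝ) ∉ uIcc 1 (1 + T) := by
      rw [uIcc_of_le h1T]; exact fun h => by linarith [h.1]
    rw [integral_comp_add_left (fun x : ℝ => x ^ (-β)), add_zero,
      integral_rpow (Or.inr ⟨hβ', h0⟩), Real.one_rpow, neg_add_eq_sub]
  rw [hint]
  rcases hβ.lt_or_gt with hlt | hgt
  · rw [abs_of_pos (by linarith)]
    gcongr
    calc (1 + T) ^ (1 - β) - 1 ≤ (1 + T) ^ (1 - β) := by linarith
      _ ≤ (1 + T) ^ σ := Real.rpow_le_rpow_of_exponent_le h1T hβσ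
  · rw [abs_of_neg (by linarith), ← neg_div_neg_eq, neg_sub]
    refine div_le_div_of_nonneg_right ?_ (by linarith)
    linarith [Real.rpow_nonneg (zero_le_one.trans h1T) (1 - β), Real.one_le_rpow h1T hσ]

lemma div_two_rpow_neg {x : ℝ} (hx : 0 ≤ x) (θ : ℝ) : (x / 2) ^ (-θ) = 2 ^ θ * x ^ (-θ) := by
  rw [Real.div_rpow hx zero_le_two, Real.rpow_neg zero_le_two, div_inv_eq_mul, mul_comm]

section Convolution

variable {β σ ε t : ℝ}

lemma continuousOn_one_add_sub_rpow {a b : ℝ} (hab : a ≤ b) (hbt : b ≤ t) :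
    ContinuousOn (fun y => (1 + (t - y)) ^ (-β)) (uIcc a b) := by
  refine ContinuousOn.rpow_const (by fun_prop) fun y hy => Or.inl ?_
  rw [uIcc_of_le hab] at hy
  linarith [hy.2]

lemma intervalIntegrable_rpow_mul_one_add_sub_rpow {a b : ℝ} (hε : ε < 1) (hab : a ≤ b)
    (hbt : b ≤ t) :
    IntervalIntegrable (fun y => y ^ (-ε) * (1 + (t - y)) ^ (-β)) volume a b :=
  (intervalIntegrable_rpow' (by linarith)).mul_continuousOn
    (continuousOn_one_add_sub_rpow hab hbt)

lemma integral_rpow_mul_one_add_sub_rpow_le_left (ht : 0 < t) (hε : ε < 1) (hβ : 0 ≤ β)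
    (hβσ : 1 - β ≤ σ) :
    ∫ y in (0:ℝ)..t / 2, y ^ (-ε) * (1 + (t - y)) ^ (-β)
      ≤ (t / 2) ^ (-ε) * (1 + t / 2) ^ σ / (1 - ε) := by
  have ht2 : 0 < t / 2 := by linarith
  have h1t2 : 1 ≤ 1 + t / 2 := by linarith
  calc ∫ y in (0:ℝ)..t / 2, y ^ (-ε) * (1 + (t - y)) ^ (-β)
      ≤ ∫ y in (0:ℝ)..t / 2, y ^ (-ε) * (1 + t / 2) ^ (-β) := by
        refine integral_mono_on ht2.le
          (intervalIntegrable_rpow_mul_one_add_sub_rpow hε ht2.le (by linarith))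
          ((intervalIntegrable_rpow' (by linarith)).mul_const _) fun y hy => ?_
        exact mul_le_mul_of_nonneg_left (Real.rpow_le_rpow_of_nonpos (by linarith)
          (by linarith [hy.2]) (by linarith)) (Real.rpow_nonneg hy.1 _)
    _ = (t / 2) ^ (-ε) * ((t / 2) * (1 + t / 2) ^ (-β)) / (1 - ε) := by
        rw [intervalIntegral.integral_mul_const, integral_rpow (Or.inl (by linarith)),
          Real.zero_rpow (by linarith), Real.rpow_add_one ht2.ne']
        ring
    _ ≤ (t / 2) ^ (-ε) * (1 + t / 2) ^ σ / (1 - ε) := by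
        have hpow : (t / 2) * (1 + t / 2) ^ (-β) ≤ (1 + t / 2) ^ σ :=
          calc (t / 2) * (1 + t / 2) ^ (-β) ≤ (1 + t / 2) ^ (-β) * (1 + t / 2) := by
                rw [mul_comm]; gcongr; linarith
            _ = (1 + t / 2) ^ (1 - β) := by
                rw [← Real.rpow_add_one (by linarith), neg_add_eq_sub]
            _ ≤ (1 + t / 2) ^ σ := Real.rpow_le_rpow_of_exponent_le h1t2 hβσ
        have := Real.rpow_nonneg ht2.le (-ε)
        gcongr

lemma integral_rpow_mul_one_add_sub_rpow_le_right (ht : 0 < t) (hε0 : 0 ≤ ε) (hε1 : ε < 1)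
    (hβ : β ≠ 1) (hσ : 0 ≤ σ) (hβσ : 1 - β ≤ σ) :
    ∫ y in t / 2..t, y ^ (-ε) * (1 + (t - y)) ^ (-β)
      ≤ (t / 2) ^ (-ε) * (1 + t / 2) ^ σ / |1 - β| := by
  have ht2 : 0 < t / 2 := by linarith
  have hnn := Real.rpow_nonneg ht2.le (-ε)
  calc ∫ y in t / 2..t, y ^ (-ε) * (1 + (t - y)) ^ (-β)
      ≤ ∫ y in t / 2..t, (t / 2) ^ (-ε) * (1 + (t - y)) ^ (-β) := by
        refine integral_mono_on (by linarith)
          (intervalIntegrable_rpow_mul_one_add_sub_rpow hε1 (by linarith) le_rfl)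
          ((continuousOn_const.mul (continuousOn_one_add_sub_rpow (by linarith) le_rfl)).intervalIntegrable)
          fun y hy => ?_
        exact mul_le_mul_of_nonneg_right
          (Real.rpow_le_rpow_of_nonpos ht2 hy.1 (by linarith))
          (Real.rpow_nonneg (by linarith [hy.2]) _)
    _ = (t / 2) ^ (-ε) * ∫ s in (0:ℝ)..t / 2, (1 + s) ^ (-β) := by
        rw [intervalIntegral.integral_const_mul, integral_comp_sub_left (fun s => (1 + s) ^ (-β)),
          sub_self, sub_half]
    _ ≤ (t / 2) ^ (-ε) * ((1 + t / 2) ^ σ / |1 - β|) := by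
        gcongr
        exact integral_one_add_rpow_neg_le ht2.le hβ hσ hβσ
    _ = _ := by ring

end Convolution

lemma half_rpow_mul_one_add_half_rpow_le {ε σ t : ℝ} (ht : 0 < t) (hσ : 0 ≤ σ) :
    (t / 2) ^ (-ε) * (1 + t / 2) ^ σ ≤ 2 ^ ε * (t ^ (-ε) * (1 + t) ^ σ) := by
  rw [div_two_rpow_neg ht.le, mul_assoc]
  have := Real.rpow_nonneg ht.le (-ε)
  gcongr
  linarith

lemma abs_Bop_le {F g : ℝ → ℝ} {ε C₀ β σ D t : ℝ} (hFbar : ∀ y, 0 ≤ Fbar F y)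
    (htail : ∀ z, 0 < z → Fbar F z ≤ C₀ * z ^ (-ε)) (hε0 : 0 ≤ ε) (hε1 : ε < 1)
    (hβ0 : 0 ≤ β) (hβ1 : β ≠ 1) (hσ : 0 ≤ σ) (hβσ : 1 - β ≤ σ)
    (hg : ∀ s, 0 ≤ s → |g s| ≤ D * (1 + s) ^ (-β)) (ht : 0 < t) :
    |Bop F g t| ≤ 2 ^ ε * D * C₀ * (1 / (1 - ε) + 1 / |1 - β|) * (t ^ (-ε) * (1 + t) ^ σ) := by
  have hC₀ : 0 ≤ C₀ := by simpa using (hFbar 1).trans (htail 1 one_pos)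
  have hD : 0 ≤ D := by simpa using (abs_nonneg _).trans (hg 0 le_rfl)
  calc |Bop F g t| ≤ ∫ y in (0:ℝ)..t, D * C₀ * (y ^ (-ε) * (1 + (t - y)) ^ (-β)) := by
        rw [Bop, ← Real.norm_eq_abs]
        refine norm_integral_le_of_norm_le ht.le (ae_of_all _ fun y hy => ?_)
          ((intervalIntegrable_rpow_mul_one_add_sub_rpow hε1 ht.le le_rfl).const_mul _)
        rw [norm_mul, Real.norm_eq_abs, Real.norm_of_nonneg (hFbar y)]
        calc |g (t - y)| * Fbar F y ≤ D * (1 + (t - y)) ^ (-β) * (C₀ * y ^ (-ε)) :=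
              mul_le_mul (hg _ (by linarith [hy.2])) (htail y hy.1) (hFbar y)
                (mul_nonneg hD (Real.rpow_nonneg (by linarith [hy.2]) _))
          _ = D * C₀ * (y ^ (-ε) * (1 + (t - y)) ^ (-β)) := by ring
    _ = D * C₀ * ((∫ y in (0:ℝ)..t / 2, y ^ (-ε) * (1 + (t - y)) ^ (-β))
          + ∫ y in t / 2..t, y ^ (-ε) * (1 + (t - y)) ^ (-β)) := by
        rw [intervalIntegral.integral_const_mul, integral_add_adjacent_intervals
          (intervalIntegrable_rpow_mul_one_add_sub_rpow hε1 (by linarith) (by linarith))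
          (intervalIntegrable_rpow_mul_one_add_sub_rpow hε1 (by linarith) le_rfl)]
    _ ≤ D * C₀ * ((t / 2) ^ (-ε) * (1 + t / 2) ^ σ / (1 - ε)
          + (t / 2) ^ (-ε) * (1 + t / 2) ^ σ / |1 - β|) := by
        gcongr
        · exact integral_rpow_mul_one_add_sub_rpow_le_left ht hε1 hβ0 hβσ
        · exact integral_rpow_mul_one_add_sub_rpow_le_right ht hε0 hε1 hβ1 hσ hβσ
    _ = D * C₀ * (1 / (1 - ε) + 1 / |1 - β|) * ((t / 2) ^ (-ε) * (1 + t / 2) ^ σ) := by ring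
    _ ≤ D * C₀ * (1 / (1 - ε) + 1 / |1 - β|) * (2 ^ ε * (t ^ (-ε) * (1 + t) ^ σ)) := by
        have : 0 ≤ 1 / (1 - ε) := by rw [one_div_nonneg]; linarith
        exact mul_le_mul_of_nonneg_left (half_rpow_mul_one_add_half_rpow_le ht hσ) (by positivity)
    _ = _ := by ring

lemma abs_forcing_le {F g : ℝ → ℝ} {Φ₀ ε C₀ β σ D t : ℝ} (hFbar : ∀ y, 0 ≤ Fbar F y)
    (htail : ∀ z, 0 < z → Fbar F z ≤ C₀ * z ^ (-ε)) (hε0 : 0 ≤ ε) (hε1 : ε < 1)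
    (hβ0 : 0 ≤ β) (hβ1 : β ≠ 1) (hσ : 0 ≤ σ) (hβσ : 1 - β ≤ σ)
    (hg : ∀ s, 0 ≤ s → |g s| ≤ D * (1 + s) ^ (-β)) (ht : 0 < t) :
    |Φ₀ * Fbar F t + Bop F g t|
      ≤ (|Φ₀| + 2 ^ ε * D * (1 / (1 - ε) + 1 / |1 - β|)) * C₀ * (t ^ (-ε) * (1 + t) ^ σ) := by
  have hFt : Fbar F t ≤ C₀ * (t ^ (-ε) * (1 + t) ^ σ) := by
    rw [← mul_assoc]
    exact (htail t ht).trans (le_mul_of_one_le_right ((hFbar t).trans (htail t ht))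
      (Real.one_le_rpow (by linarith) hσ))
  calc |Φ₀ * Fbar F t + Bop F g t| ≤ |Φ₀ * Fbar F t| + |Bop F g t| := abs_add_le _ _
    _ = |Φ₀| * Fbar F t + |Bop F g t| := by rw [abs_mul, abs_of_nonneg (hFbar t)]
    _ ≤ |Φ₀| * (C₀ * (t ^ (-ε) * (1 + t) ^ σ))
          + 2 ^ ε * D * C₀ * (1 / (1 - ε) + 1 / |1 - β|) * (t ^ (-ε) * (1 + t) ^ σ) := by
        gcongr
        exact abs_Bop_le hFbar htail hε0 hε1 hβ0 hβ1 hσ hβσ hg ht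
    _ = _ := by ring

section Volterra

variable {γ α μ ε σ M : ℝ} {h : ℝ → ℝ}

lemma nonneg_of_abs_le_mul_rpow_mul_one_add_rpow
    (hh : ∀ t, 0 < t → |h t| ≤ M * (t ^ (-ε) * (1 + t) ^ σ)) : 0 ≤ M := by
  have := (abs_nonneg _).trans (hh 1 one_pos)
  rwa [Real.one_rpow, one_mul, mul_nonneg_iff_of_pos_right (by positivity)] at this

lemma abs_integral_volterra_kernel_le (hα : 0 ≤ α) (hγε : 0 < γ - 1 - ε) (hσ : 0 ≤ σ)
    (hh : ∀ t, 0 < t → |h t| ≤ M * (t ^ (-ε) * (1 + t) ^ σ)) {u : ℝ} (hu : 0 < u) :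
    |∫ t in (0:ℝ)..u, t ^ (γ - 2) * Real.exp (-α / t) * h t|
      ≤ M * (1 + u) ^ σ * (u ^ (γ - 1 - ε) / (γ - 1 - ε)) := by
  have hM := nonneg_of_abs_le_mul_rpow_mul_one_add_rpow hh
  calc |∫ t in (0:ℝ)..u, t ^ (γ - 2) * Real.exp (-α / t) * h t|
      ≤ ∫ t in (0:ℝ)..u, M * (1 + u) ^ σ * t ^ (γ - 2 - ε) := by
        rw [← Real.norm_eq_abs]
        refine norm_integral_le_of_norm_le hu.le (ae_of_all _ fun t ht => ?_)
          ((intervalIntegrable_rpow' (by linarith)).const_mul _)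
        have hexp : Real.exp (-α / t) ≤ 1 :=
          Real.exp_le_one_iff.2 (div_nonpos_of_nonpos_of_nonneg (by linarith) ht.1.le)
        have hpow : t ^ (γ - 2 - ε) = t ^ (γ - 2) * t ^ (-ε) := by
          rw [sub_eq_add_neg (γ - 2), Real.rpow_add ht.1]
        have := Real.rpow_nonneg ht.1.le (γ - 2)
        have := Real.rpow_nonneg ht.1.le (-ε)
        rw [norm_mul, norm_mul, Real.norm_of_nonneg (Real.rpow_nonneg ht.1.le _),
          Real.norm_of_nonneg (Real.exp_nonneg _), Real.norm_eq_abs, hpow]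
        calc t ^ (γ - 2) * Real.exp (-α / t) * |h t|
            ≤ t ^ (γ - 2) * 1 * (M * (t ^ (-ε) * (1 + u) ^ σ)) := by
              gcongr
              exact (hh t ht.1).trans (by gcongr <;> linarith [ht.1, ht.2])
          _ = M * (1 + u) ^ σ * (t ^ (γ - 2) * t ^ (-ε)) := by ring
    _ = M * (1 + u) ^ σ * (u ^ (γ - 1 - ε) / (γ - 1 - ε)) := by
        rw [intervalIntegral.integral_const_mul, integral_rpow (Or.inl (by linarith)),
          Real.zero_rpow (by linarith), show γ - 2 - ε + 1 = γ - 1 - ε by ring, sub_zero]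

lemma abs_volterra_le (hα : 0 ≤ α) (hμ : 0 ≤ μ) (hγε : 0 < γ - 1 - ε) (hσ : 0 ≤ σ)
    (hh : ∀ t, 0 < t → |h t| ≤ M * (t ^ (-ε) * (1 + t) ^ σ)) {u : ℝ} (hu : 1 ≤ u) :
    |μ * u ^ (-γ) * Real.exp (α / u) * ∫ t in (0:ℝ)..u, t ^ (γ - 2) * Real.exp (-α / t) * h t|
      ≤ μ * Real.exp α * M * 2 ^ σ / (γ - 1 - ε) * u ^ (σ - 1 - ε) := by
  have hu0 : 0 < u := by linarith
  have hM := nonneg_of_abs_le_mul_rpow_mul_one_add_rpow hh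
  rw [abs_mul, abs_of_nonneg (by positivity)]
  calc μ * u ^ (-γ) * Real.exp (α / u)
        * |∫ t in (0:ℝ)..u, t ^ (γ - 2) * Real.exp (-α / t) * h t|
      ≤ μ * u ^ (-γ) * Real.exp α * (M * (2 * u) ^ σ * (u ^ (γ - 1 - ε) / (γ - 1 - ε))) := by
        have := Real.rpow_nonneg hu0.le (γ - 1 - ε)
        gcongr
        · exact div_le_self hα hu
        · exact (abs_integral_volterra_kernel_le hα hγε hσ hh hu0).trans (by gcongr; linarith)
    _ = μ * Real.exp α * M * 2 ^ σ / (γ - 1 - ε) * (u ^ (-γ) * u ^ σ * u ^ (γ - 1 - ε)) := by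
        rw [Real.mul_rpow zero_le_two hu0.le]; ring
    _ = μ * Real.exp α * M * 2 ^ σ / (γ - 1 - ε) * u ^ (σ - 1 - ε) := by
        rw [← Real.rpow_add hu0, ← Real.rpow_add hu0]; ring_nf

end Volterra

lemma abs_le_mul_one_add_rpow_neg {g : ℝ → ℝ} {A K θ : ℝ} (hθ : 0 ≤ θ)
    (hsmall : ∀ s ∈ Icc (0:ℝ) 1, |g s| ≤ A) (hlarge : ∀ u, 1 ≤ u → |g u| ≤ K * u ^ (-θ))
    {s : ℝ} (hs : 0 ≤ s) : |g s| ≤ 2 ^ θ * max A K * (1 + s) ^ (-θ) := by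
  have hK : 0 ≤ K := by simpa using (abs_nonneg _).trans (hlarge 1 le_rfl)
  rcases le_total s 1 with hs1 | hs1
  · have hone : 1 ≤ 2 ^ θ * (1 + s) ^ (-θ) := by
      rw [← div_two_rpow_neg (by linarith)]
      exact Real.one_le_rpow_of_pos_of_le_one_of_nonpos (by linarith) (by linarith)
        (by linarith)
    calc |g s| ≤ max A K := (hsmall s ⟨hs, hs1⟩).trans (le_max_left _ _)
      _ ≤ max A K * (2 ^ θ * (1 + s) ^ (-θ)) :=
          le_mul_of_one_le_right (hK.trans (le_max_right _ _)) hone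
      _ = _ := by ring
  · calc |g s| ≤ K * s ^ (-θ) := hlarge s hs1
      _ ≤ max A K * ((1 + s) / 2) ^ (-θ) :=
          mul_le_mul (le_max_right _ _)
            (Real.rpow_le_rpow_of_nonpos (by linarith) (by linarith) (by linarith))
            (Real.rpow_nonneg (by linarith) _) (hK.trans (le_max_right _ _))
      _ = _ := by rw [div_two_rpow_neg (by linarith)]; ring

lemma IsVolterraSol.exists_abs_le_mul_rpow {γ α μ Φ₀ ε C₀ : ℝ} {F g : ℝ → ℝ}
    (hg : IsVolterraSol γ α μ Φ₀ F g) (hα : 0 ≤ α) (hμ : 0 < μ) (hFbar : ∀ y, 0 ≤ Fbar F y)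
    (htail : ∀ z, 0 < z → Fbar F z ≤ C₀ * z ^ (-ε)) (hC₀ : 0 < C₀) (hε0 : 0 ≤ ε) (hε1 : ε < 1)
    (hγε : 0 < γ - 1 - ε) ⦃β σ D : ℝ⦄ (hβ0 : 0 ≤ β) (hβ1 : β ≠ 1) (hσ : 0 ≤ σ)
    (hβσ : 1 - β ≤ σ) (hD : 0 < D) (hgD : ∀ s, 0 ≤ s → |g s| ≤ D * (1 + s) ^ (-β)) :
    ∃ K, 0 < K ∧ ∀ u, 1 ≤ u → |g u| ≤ K * u ^ (σ - 1 - ε) := by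
  have hM : 0 < |Φ₀| + 2 ^ ε * D * (1 / (1 - ε) + 1 / |1 - β|) :=
    add_pos_of_nonneg_of_pos (abs_nonneg _) <| mul_pos (by positivity) <|
      add_pos_of_pos_of_nonneg (one_div_pos.2 (by linarith)) (by positivity)
  refine ⟨μ * Real.exp α * ((|Φ₀| + 2 ^ ε * D * (1 / (1 - ε) + 1 / |1 - β|)) * C₀) * 2 ^ σ
    / (γ - 1 - ε), by positivity, fun u hu => ?_⟩
  rw [hg.2 u (by linarith)]
  exact abs_volterra_le hα hμ.le hγε hσ
    (fun t ht => abs_forcing_le hFbar htail hε0 hε1 hβ0 hβ1 hσ hβσ hgD ht) hu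

theorem stmt7_general (γ α μ : ℝ) (hα : 0 < α) (hμ : 0 < μ)
    (F : ℝ → ℝ) (hF : IsCDF F) (Φ₀ : ℝ)
    (ε C₀ : ℝ) (hε : ε ∈ Set.Ioo (0:ℝ) 1) (hγε : 0 < γ - 1 - ε) (hC₀ : 0 < C₀)
    (htail : ∀ z : ℝ, 0 < z → Fbar F z ≤ C₀ * z ^ (-ε))
    (g : ℝ → ℝ) (hg : IsVolterraSol γ α μ Φ₀ F g)
    (δ : ℝ) (hδ : δ ∈ Set.Icc (0:ℝ) 1) (C : ℝ) (hC : 0 < C)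
    (hgdec : ∀ u : ℝ, 0 ≤ u → |g u| ≤ C * (1 + u) ^ (-δ)) :
    ∃ C' : ℝ, 0 < C' ∧ ∃ U : ℝ, 0 < U ∧
      ∀ u : ℝ, U ≤ u → |g u| ≤ C' * u ^ (-(δ + ε)) := by
  obtain ⟨hε0, hε1⟩ := hε
  have step := hg.exists_abs_le_mul_rpow hα.le hμ (Fbar_nonneg hF) htail hC₀ hε0.le hε1 hγε
  suffices ∃ K, 0 < K ∧ ∀ u, 1 ≤ u → |g u| ≤ K * u ^ (-(δ + ε)) by
    obtain ⟨K, hK, hKu⟩ := this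
    exact ⟨K, hK, 1, one_pos, hKu⟩
  rcases hδ.2.lt_or_eq with hδ1 | rfl
  · rw [show -(δ + ε) = 1 - δ - 1 - ε by ring]
    exact step hδ.1 hδ1.ne (by linarith) le_rfl hC hgdec
  obtain ⟨K, hK, hKu⟩ := step (β := 1 - ε / 2) (σ := ε / 2) (by linarith) (by linarith)
    (by linarith) (by linarith) hC fun s hs => (hgdec s hs).trans <|
      mul_le_mul_of_nonneg_left (Real.rpow_le_rpow_of_exponent_le (by linarith) (by linarith))
        hC.le
  have hsmall : ∀ s ∈ Icc (0:ℝ) 1, |g s| ≤ C := fun s hs => (hgdec s hs.1).trans <|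
    mul_le_of_le_one_right hC.le (Real.rpow_le_one_of_one_le_of_nonpos (by linarith [hs.1])
      (by norm_num))
  have hlarge : ∀ u, 1 ≤ u → |g u| ≤ K * u ^ (-(1 + ε / 2)) := by
    simpa only [show ε / 2 - 1 - ε = -(1 + ε / 2) by ring] using hKu
  rw [show -(1 + ε) = 0 - 1 - ε by ring]
  exact step (by linarith) (by linarith) le_rfl (by linarith) (by positivity)
    fun s hs => abs_le_mul_one_add_rpow_neg (by linarith) hsmall hlarge hs

theorem stmt7 (γ α μ : ℝ) (hγ : 1 < γ) (hα : 0 < α) (hμ : 0 < μ)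
    (F : ℝ → ℝ) (hF : IsCDF F) (Φ₀ : ℝ) (hΦ₀ : 0 < Φ₀)
    (ε C₀ : ℝ) (hε : ε ∈ Set.Ioo (0:ℝ) 1) (hγε : 0 < γ - 1 - ε) (hC₀ : 0 < C₀)
    (htail : ∀ z : ℝ, 0 < z → Fbar F z ≤ C₀ * z ^ (-ε))
    (g : ℝ → ℝ) (hg : IsVolterraSol γ α μ Φ₀ F g)
    (δ : ℝ) (hδ : δ ∈ Set.Icc (0:ℝ) 1) (C : ℝ) (hC : 0 < C)
    (hgdec : ∀ u : ℝ, 0 ≤ u → |g u| ≤ C * (1 + u) ^ (-δ)) :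
    ∃ C' : ℝ, 0 < C' ∧ ∃ U : ℝ, 0 < U ∧
      ∀ u : ℝ, U ≤ u → |g u| ≤ C' * u ^ (-(δ + ε)) :=
  stmt7_general γ α μ hα hμ F hF Φ₀ ε C₀ hε hγε hC₀ htail g hg δ hδ C hC hgdec
end

section
/- Strict positivity: if Φ₀ > 0 and g is a continuous solution of the Volterra equation (★) on [0, ∞), then g(u) > 0 for all u ≥ 0. Consequently the function G(u) := Φ₀ + ∫₀ᵘ g(y) dy is strictly increasing on [0, ∞). -/
open MeasureTheory Filter Set Topology

/-!
Near `0` the input `Φ₀ F̄ + Bg` is close to `Φ₀`, while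
`u ^ (-γ) * exp (α / u) * ∫₀ᵘ t ^ (γ - 2) * exp (-α / t) dt ≥ exp (-2α) / 2 ^ γ`
(estimate the integral on `[u - u², u]`). So `g` is bounded below by a positive constant on some
`(0, η]`, and `g 0 > 0` by continuity. Positivity then propagates: if `g > 0` on `[0, u)`, then
`Bg ≥ 0` on `[0, u]`, the integrand of (★) is nonnegative there, and the integral up to `u`
dominates the one up to `u / 2`, which is positive because `g (u / 2)` is. At the first zero of
`g` this is a contradiction.
-/

lemma ContinuousOn.pos_of_forall_Ico_pos {X : Type*} [ConditionallyCompleteLinearOrder X]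
    [TopologicalSpace X] [OrderTopology X] {a : X} {g : X → ℝ} (hg : ContinuousOn g (Ici a))
    (h : ∀ u, a ≤ u → (∀ t ∈ Ico a u, 0 < g t) → 0 < g u) {u : X} (hu : a ≤ u) : 0 < g u := by
  by_contra hgu
  have hS : IsClosed (Ici a ∩ g ⁻¹' Iic 0) :=
    hg.preimage_isClosed_of_isClosed isClosed_Ici isClosed_Iic
  obtain ⟨⟨hu₀, hgu₀⟩, hleast⟩ := hS.isLeast_csInf ⟨u, hu, not_lt.1 hgu⟩ ⟨a, fun x hx => hx.1⟩
  exact not_lt.2 hgu₀ <| h _ hu₀ fun t ht => not_le.1 fun hgt => not_le.2 ht.2 (hleast ⟨ht.1, hgt⟩)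

lemma strictMonoOn_const_add_integral {g : ℝ → ℝ} {a : ℝ} (c : ℝ) (hg : ContinuousOn g (Ici a))
    (hpos : ∀ u ∈ Ici a, 0 < g u) : StrictMonoOn (fun u => c + ∫ y in a..u, g y) (Ici a) := by
  intro x hx y hy hxy
  have hint : ∀ z ∈ Ici a, IntervalIntegrable g volume a z := fun z hz =>
    (hg.mono fun w hw => by rw [uIcc_of_le hz] at hw; exact hw.1).intervalIntegrable
  have hxy_int := (hint x hx).symm.trans (hint y hy)
  have hxy_pos := intervalIntegral.intervalIntegral_pos_of_pos_on hxy_int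
    (fun z hz => hpos z (hx.trans hz.1.le)) hxy
  simp only
  rw [← intervalIntegral.integral_add_adjacent_intervals (hint x hx) hxy_int]
  linarith

lemma StronglyMeasurable.integral_Ioc_right {E : Type*} [NormedAddCommGroup E] [NormedSpace ℝ E]
    {k : ℝ × ℝ → E} (hk : StronglyMeasurable k) (a : ℝ) :
    StronglyMeasurable fun t => ∫ y in Ioc a t, k (t, y) := by
  have hS : MeasurableSet {p : ℝ × ℝ | p.2 ∈ Ioc a p.1} :=
    (measurableSet_lt measurable_const measurable_snd).inter
      (measurableSet_le measurable_snd measurable_fst)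
  convert (hk.indicator hS).integral_prod_right' (ν := (volume : Measure ℝ)) using 2 with t
  rw [← integral_indicator measurableSet_Ioc]
  rfl

namespace IsCDF

variable {F : ℝ → ℝ}

lemma fbar_nonneg (hF : IsCDF F) (x : ℝ) : 0 ≤ Fbar F x :=
  sub_nonneg.2 (hF.1.ge_of_tendsto hF.2.2.2 x)

lemma fbar_le_one (hF : IsCDF F) (x : ℝ) : Fbar F x ≤ 1 := by
  have : 0 ≤ F x := (hF.2.2.1 _ (min_le_right x 0)).symm.le.trans (hF.1 (min_le_left x 0))
  unfold Fbar
  linarith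

lemma tendsto_fbar_nhdsGE_zero (hF : IsCDF F) : Tendsto (Fbar F) (𝓝[≥] 0) (𝓝 1) := by
  have h : Tendsto (fun x => 1 - F x) (𝓝[≥] 0) (𝓝 (1 - F 0)) := (hF.2.1 0).const_sub 1
  rwa [hF.2.2.1 0 le_rfl, sub_zero] at h

end IsCDF

section Convolution

variable {F g : ℝ → ℝ} {t : ℝ}

lemma norm_bop_le (hF : IsCDF F) {C : ℝ} (hg : ∀ s ∈ Icc 0 t, ‖g s‖ ≤ C) (ht : 0 ≤ t) :
    ‖Bop F g t‖ ≤ C * t := by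
  have h := intervalIntegral.norm_integral_le_of_norm_le_const (a := 0) (b := t)
    (f := fun y => g (t - y) * Fbar F y) (C := C) fun y hy => by
      rw [uIoc_of_le ht] at hy
      rw [norm_mul, Real.norm_of_nonneg (hF.fbar_nonneg y)]
      exact (mul_le_of_le_one_right (norm_nonneg _) (hF.fbar_le_one y)).trans
        (hg _ ⟨by linarith [hy.2], by linarith [hy.1]⟩)
  simpa [Bop, abs_of_nonneg ht] using h

lemma bop_nonneg (hF : IsCDF F) (ht : 0 ≤ t) (hg : ∀ s ∈ Ico 0 t, 0 ≤ g s) : 0 ≤ Bop F g t := by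
  rw [Bop, intervalIntegral.integral_of_le ht]
  exact setIntegral_nonneg measurableSet_Ioc fun y hy =>
    mul_nonneg (hg _ ⟨by linarith [hy.2], by linarith [hy.1]⟩) (hF.fbar_nonneg y)

lemma tendsto_bop_nhdsGE_zero (hF : IsCDF F) (hg : ContinuousOn g (Ici 0)) :
    Tendsto (Bop F g) (𝓝[≥] 0) (𝓝 0) := by
  obtain ⟨C, hC⟩ := isCompact_Icc.exists_bound_of_continuousOn
    (hg.mono (Icc_subset_Ici_self : Icc (0 : ℝ) 1 ⊆ Ici 0))
  have hlim : Tendsto (fun t => C * t) (𝓝[≥] 0) (𝓝 0) := by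
    simpa using ((continuous_const_mul C).tendsto 0).mono_left nhdsWithin_le_nhds
  refine squeeze_zero_norm' ?_ hlim
  filter_upwards [Icc_mem_nhdsGE one_pos] with t ht
  exact norm_bop_le hF (fun s hs => hC s ⟨hs.1, hs.2.trans ht.2⟩) ht.1

/-- On `[0, ∞)` the convolution only sees `g` on `[0, ∞)`, where it agrees with the continuous
function `g ∘ max 0`. -/
lemma aestronglyMeasurable_bop (hF : IsCDF F) (hg : ContinuousOn g (Ici 0)) (u : ℝ) :
    AEStronglyMeasurable (Bop F g) (volume.restrict (Ioc 0 u)) := by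
  have hk : StronglyMeasurable fun p : ℝ × ℝ => g (max 0 (p.1 - p.2)) * Fbar F p.2 :=
    ((hg.comp_continuous (continuous_const.max (continuous_fst.sub continuous_snd))
      fun _ => mem_Ici.2 (le_max_left _ _)).measurable.mul
      (measurable_const.sub (hF.1.measurable.comp measurable_snd))).stronglyMeasurable
  refine (StronglyMeasurable.integral_Ioc_right hk 0).aestronglyMeasurable.congr ?_
  filter_upwards [ae_restrict_mem measurableSet_Ioc] with t ht
  rw [Bop, intervalIntegral.integral_of_le ht.1.le]
  exact setIntegral_congr_fun measurableSet_Ioc fun y hy => by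
    simp only [max_eq_right (sub_nonneg.2 hy.2)]

end Convolution

noncomputable def volterraKernel (γ α t : ℝ) : ℝ := t ^ (γ - 2) * Real.exp (-α / t)

noncomputable def volterraInput (Φ₀ : ℝ) (F g : ℝ → ℝ) (t : ℝ) : ℝ := Φ₀ * Fbar F t + Bop F g t

section Kernel

variable {γ α : ℝ}

lemma volterraKernel_nonneg {t : ℝ} (ht : 0 ≤ t) : 0 ≤ volterraKernel γ α t := by
  unfold volterraKernel
  positivity

lemma volterraKernel_le (hα : 0 < α) {t : ℝ} (ht : 0 < t) :
    volterraKernel γ α t ≤ 2 / α ^ 2 * t ^ γ := by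
  have hexp : Real.exp (-α / t) ≤ 2 * t ^ 2 / α ^ 2 := by
    have hx : 0 < α / t := div_pos hα ht
    have hq : (α / t) ^ 2 / 2 ≤ Real.exp (α / t) := by
      linarith [Real.quadratic_le_exp_of_nonneg hx.le]
    rw [neg_div, Real.exp_neg, inv_le_comm₀ (Real.exp_pos _) (by positivity)]
    calc (2 * t ^ 2 / α ^ 2)⁻¹ = (α / t) ^ 2 / 2 := by field_simp
      _ ≤ _ := hq
  calc volterraKernel γ α t ≤ t ^ (γ - 2) * (2 * t ^ 2 / α ^ 2) :=
        mul_le_mul_of_nonneg_left hexp (by positivity)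
    _ = 2 / α ^ 2 * t ^ γ := by
        rw [Real.rpow_sub ht, Real.rpow_two]
        field_simp

lemma volterraKernel_intervalIntegrable (hγ : 0 ≤ γ) (hα : 0 < α) {u : ℝ} (hu : 0 ≤ u) :
    IntervalIntegrable (volterraKernel γ α) volume 0 u := by
  rw [intervalIntegrable_iff_integrableOn_Ioc_of_le hu]
  refine Measure.integrableOn_of_bounded (M := 2 / α ^ 2 * u ^ γ) measure_Ioc_lt_top.ne
    (by unfold volterraKernel; fun_prop) ?_
  filter_upwards [ae_restrict_mem measurableSet_Ioc] with t ht
  rw [Real.norm_of_nonneg (volterraKernel_nonneg ht.1.le)]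
  exact (volterraKernel_le hα ht.1).trans <|
    mul_le_mul_of_nonneg_left (Real.rpow_le_rpow ht.1.le ht.2 hγ) (by positivity)

/-- The width `u²` of the window `[u - u², u]` is what keeps `exp (α / u - α / (u - u²))` bounded
below. -/
lemma exp_div_rpow_le_integral_volterraKernel (hγ : 0 ≤ γ) (hα : 0 < α) {u : ℝ} (hu : 0 < u)
    (hu' : u ≤ 1 / 2) :
    Real.exp (-(2 * α)) / 2 ^ γ ≤
      u ^ (-γ) * Real.exp (α / u) * ∫ t in 0..u, volterraKernel γ α t := by
  set v := u - u ^ 2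
  have hv0 : 0 < v := by nlinarith
  have hvu : v ≤ u := by nlinarith
  have hK := volterraKernel_intervalIntegrable hγ hα hu.le
  have hKv := volterraKernel_intervalIntegrable hγ hα hv0.le
  have hlow : ∀ t ∈ Icc v u, (u / 2) ^ γ / u ^ 2 * Real.exp (-α / v) ≤ volterraKernel γ α t := by
    intro t ht
    have ht0 : 0 < t := hv0.trans_le ht.1
    have hexp : Real.exp (-α / v) ≤ Real.exp (-α / t) := by
      rw [neg_div, neg_div, Real.exp_le_exp, neg_le_neg_iff]
      gcongr
      exact ht.1
    rw [volterraKernel, Real.rpow_sub ht0, Real.rpow_two]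
    gcongr
    · nlinarith [ht.1]
    · exact ht.2
  have hwindow : u ^ 2 * ((u / 2) ^ γ / u ^ 2 * Real.exp (-α / v)) ≤
      ∫ t in v..u, volterraKernel γ α t := by
    have h := intervalIntegral.integral_mono_on hvu intervalIntegrable_const
      (hKv.symm.trans hK) hlow
    rwa [intervalIntegral.integral_const, smul_eq_mul, show u - v = u ^ 2 by ring] at h
  have hhead : 0 ≤ ∫ t in 0..v, volterraKernel γ α t :=
    intervalIntegral.integral_nonneg hv0.le fun t ht => volterraKernel_nonneg ht.1
  have hexponent : -(2 * α) ≤ α / u + -α / v := by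
    have h1u : 0 < 1 - u := by linarith
    have h : α / u + -α / v = -(α / (1 - u)) := by
      rw [show v = u * (1 - u) by ring]
      field_simp
      ring
    rw [h, neg_le_neg_iff, div_le_iff₀ (by linarith)]
    nlinarith
  calc Real.exp (-(2 * α)) / 2 ^ γ ≤ Real.exp (α / u + -α / v) / 2 ^ γ := by gcongr
    _ = u ^ (-γ) * Real.exp (α / u) * (u ^ 2 * ((u / 2) ^ γ / u ^ 2 * Real.exp (-α / v))) := by
        rw [Real.exp_add, Real.div_rpow hu.le zero_le_two, Real.rpow_neg hu.le]
        field_simp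
    _ ≤ u ^ (-γ) * Real.exp (α / u) * ∫ t in v..u, volterraKernel γ α t := by gcongr
    _ ≤ u ^ (-γ) * Real.exp (α / u) * ∫ t in 0..u, volterraKernel γ α t := by
        rw [← intervalIntegral.integral_add_adjacent_intervals hKv (hKv.symm.trans hK)]
        gcongr
        linarith

end Kernel

namespace IsVolterraSol

variable {γ α μ Φ₀ : ℝ} {F g : ℝ → ℝ}

lemma apply_eq (hg : IsVolterraSol γ α μ Φ₀ F g) {u : ℝ} (hu : 0 < u) :
    g u = μ * u ^ (-γ) * Real.exp (α / u) *
      ∫ t in 0..u, volterraKernel γ α t * volterraInput Φ₀ F g t :=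
  hg.2 u hu

lemma intervalIntegrable_integrand (hg : IsVolterraSol γ α μ Φ₀ F g) (hγ : 0 ≤ γ) (hα : 0 < α)
    (hF : IsCDF F) {u : ℝ} (hu : 0 ≤ u) :
    IntervalIntegrable (fun t => volterraKernel γ α t * volterraInput Φ₀ F g t) volume 0 u := by
  obtain ⟨C, hC⟩ := isCompact_Icc.exists_bound_of_continuousOn
    (hg.1.mono (Icc_subset_Ici_self : Icc 0 u ⊆ Ici 0))
  have hmeas : AEStronglyMeasurable (volterraInput Φ₀ F g) (volume.restrict (Ioc 0 u)) :=
    ((measurable_const.mul (measurable_const.sub hF.1.measurable)).aestronglyMeasurable).add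
      (aestronglyMeasurable_bop hF hg.1 u)
  have hK := volterraKernel_intervalIntegrable hγ hα hu
  rw [intervalIntegrable_iff_integrableOn_Ioc_of_le hu] at hK ⊢
  refine hK.mul_bdd hmeas (c := |Φ₀| + C * u) ?_
  filter_upwards [ae_restrict_mem measurableSet_Ioc] with t ht
  have hB := norm_bop_le hF (fun s hs => hC s ⟨hs.1, hs.2.trans ht.2⟩) ht.1.le
  have hC0 : 0 ≤ C := (norm_nonneg _).trans (hC 0 ⟨le_rfl, hu⟩)
  calc ‖volterraInput Φ₀ F g t‖ ≤ |Φ₀| * 1 + C * t := by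
        refine (norm_add_le _ _).trans (add_le_add ?_ hB)
        rw [norm_mul, Real.norm_eq_abs, Real.norm_of_nonneg (hF.fbar_nonneg t)]
        exact mul_le_mul_of_nonneg_left (hF.fbar_le_one t) (abs_nonneg _)
    _ ≤ |Φ₀| + C * u := by nlinarith [ht.2]

lemma le_apply_of_le_volterraInput (hg : IsVolterraSol γ α μ Φ₀ F g) (hγ : 0 ≤ γ) (hα : 0 < α)
    (hμ : 0 ≤ μ) (hF : IsCDF F) {m u : ℝ} (hm : 0 ≤ m) (hu : 0 < u) (hu' : u ≤ 1 / 2)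
    (hinput : ∀ t ∈ Icc 0 u, m ≤ volterraInput Φ₀ F g t) :
    μ * m * (Real.exp (-(2 * α)) / 2 ^ γ) ≤ g u := by
  have hI : m * ∫ t in 0..u, volterraKernel γ α t ≤
      ∫ t in 0..u, volterraKernel γ α t * volterraInput Φ₀ F g t := by
    rw [← intervalIntegral.integral_const_mul]
    refine intervalIntegral.integral_mono_on hu.le
      ((volterraKernel_intervalIntegrable hγ hα hu.le).const_mul m)
      (hg.intervalIntegrable_integrand hγ hα hF hu.le) fun t ht => ?_
    rw [mul_comm]
    exact mul_le_mul_of_nonneg_left (hinput t ht) (volterraKernel_nonneg ht.1)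
  rw [hg.apply_eq hu]
  calc μ * m * (Real.exp (-(2 * α)) / 2 ^ γ)
      ≤ μ * m * (u ^ (-γ) * Real.exp (α / u) * ∫ t in 0..u, volterraKernel γ α t) := by
        gcongr
        exact exp_div_rpow_le_integral_volterraKernel hγ hα hu hu'
    _ = μ * u ^ (-γ) * Real.exp (α / u) * (m * ∫ t in 0..u, volterraKernel γ α t) := by ring
    _ ≤ _ := by gcongr

lemma apply_zero_pos (hg : IsVolterraSol γ α μ Φ₀ F g) (hγ : 0 ≤ γ) (hα : 0 < α) (hμ : 0 < μ)
    (hF : IsCDF F) (hΦ₀ : 0 < Φ₀) : 0 < g 0 := by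
  have hinput : Tendsto (volterraInput Φ₀ F g) (𝓝[≥] 0) (𝓝 Φ₀) := by
    have h := (hF.tendsto_fbar_nhdsGE_zero.const_mul Φ₀).add (tendsto_bop_nhdsGE_zero hF hg.1)
    rwa [mul_one, add_zero] at h
  obtain ⟨δ, hδ, hδinput⟩ := mem_nhdsGE_iff_exists_Icc_subset.1
    (hinput.eventually (eventually_ge_nhds (half_lt_self hΦ₀)))
  have hlower : ∀ᶠ u in 𝓝[>] 0, μ * (Φ₀ / 2) * (Real.exp (-(2 * α)) / 2 ^ γ) ≤ g u := by
    filter_upwards [Ioc_mem_nhdsGT (lt_min hδ one_half_pos)] with u hu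
    exact hg.le_apply_of_le_volterraInput hγ hα hμ.le hF (half_pos hΦ₀).le hu.1
      (hu.2.trans (min_le_right _ _))
      fun t ht => hδinput ⟨ht.1, ht.2.trans (hu.2.trans (min_le_left _ _))⟩
  have hcont : Tendsto g (𝓝[>] 0) (𝓝 (g 0)) :=
    (hg.1 0 self_mem_Ici).mono_left (nhdsWithin_mono _ Ioi_subset_Ici_self)
  exact lt_of_lt_of_le (by positivity) (ge_of_tendsto hcont hlower)

lemma apply_pos_of_forall_Ico_pos (hg : IsVolterraSol γ α μ Φ₀ F g) (hγ : 0 ≤ γ) (hα : 0 < α)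
    (hμ : 0 < μ) (hF : IsCDF F) (hΦ₀ : 0 ≤ Φ₀) {u : ℝ} (hu : 0 < u)
    (hpos : ∀ t ∈ Ico 0 u, 0 < g t) : 0 < g u := by
  have hhalf : 0 < u / 2 := half_pos hu
  have hint₁ := hg.intervalIntegrable_integrand hγ hα hF hhalf.le
  have h₁ : 0 < ∫ t in 0..u / 2, volterraKernel γ α t * volterraInput Φ₀ F g t := by
    have h := hpos (u / 2) ⟨hhalf.le, half_lt_self hu⟩
    rw [hg.apply_eq hhalf] at h
    exact pos_of_mul_pos_right h (by positivity)
  have h₂ : 0 ≤ ∫ t in u / 2..u, volterraKernel γ α t * volterraInput Φ₀ F g t :=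
    intervalIntegral.integral_nonneg (half_le_self hu.le) fun t ht =>
      mul_nonneg (volterraKernel_nonneg (hhalf.le.trans ht.1)) <|
        add_nonneg (mul_nonneg hΦ₀ (hF.fbar_nonneg t)) <| bop_nonneg hF (hhalf.le.trans ht.1)
          fun s hs => (hpos s ⟨hs.1, hs.2.trans_le ht.2⟩).le
  rw [hg.apply_eq hu, ← intervalIntegral.integral_add_adjacent_intervals hint₁
    (hint₁.symm.trans (hg.intervalIntegrable_integrand hγ hα hF hu.le))]
  exact mul_pos (by positivity) (by linarith)

end IsVolterraSol

theorem stmt9 (γ α μ : ℝ) (hγ : 1 < γ) (hα : 0 < α) (hμ : 0 < μ)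
    (F : ℝ → ℝ) (hF : IsCDF F) (Φ₀ : ℝ) (hΦ₀ : 0 < Φ₀)
    (g : ℝ → ℝ) (hg : IsVolterraSol γ α μ Φ₀ F g) :
    (∀ u : ℝ, 0 ≤ u → 0 < g u) ∧
    StrictMonoOn (fun u : ℝ => Φ₀ + ∫ y in (0:ℝ)..u, g y) (Set.Ici 0) := by
  have hγ₀ : 0 ≤ γ := by linarith
  have hpos : ∀ u : ℝ, 0 ≤ u → 0 < g u := fun u hu =>
    hg.1.pos_of_forall_Ico_pos (fun v hv hlt => by
      rcases hv.eq_or_lt with rfl | hv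
      · exact hg.apply_zero_pos hγ₀ hα hμ hF hΦ₀
      · exact hg.apply_pos_of_forall_Ico_pos hγ₀ hα hμ hF hΦ₀.le hv hlt) hu
  exact ⟨hpos, strictMonoOn_const_add_integral Φ₀ hg.1 hpos⟩
end
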